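/- arXiv:2111.08057 — 3 statements merged into one kernel-verified Lean document; each statement's English description precedes it below -/
import Mathlib

section
/- Let x, x', q lie in the closed unit ball of ℝ^d, and let T(x) = (1/√2)·(x, ‖x‖₂²), Q(q) = (1/√5)·(2q, -1). Set ℓ₁ = |‖q-x‖₂ - ‖q-x'‖₂| and ℓ₂ = |⟨T(x),Q(q)⟩ - ⟨T(x'),Q(q)⟩|. Then ℓ₁ ≤ 2√ℓ₂. -/
open scoped RealInnerProductSpace

noncomputable def Tmap (d : ℕ) (x : EuclideanSpace ℝ (Fin d)) : EuclideanSpace ℝ (Fin (d + 1)) :=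
  (Real.sqrt 2)⁻¹ • (WithLp.toLp 2 (Fin.snoc (WithLp.ofLp x) (‖x‖ ^ 2) : Fin (d + 1) → ℝ) : EuclideanSpace ℝ (Fin (d + 1)))

noncomputable def Qmap (d : ℕ) (q : EuclideanSpace ℝ (Fin d)) : EuclideanSpace ℝ (Fin (d + 1)) :=
  (Real.sqrt 5)⁻¹ • (WithLp.toLp 2 (Fin.snoc (WithLp.ofLp ((2 : ℝ) • q)) (-1) : Fin (d + 1) → ℝ) : EuclideanSpace ℝ (Fin (d + 1)))

lemma inner_TQ (d : ℕ) (x q : EuclideanSpace ℝ (Fin d)) :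
    ⟪Tmap d x, Qmap d q⟫ = (Real.sqrt 10)⁻¹ * (2 * ⟪x, q⟫ - ‖x‖ ^ 2) := by
  have h10 : Real.sqrt 2 * Real.sqrt 5 = Real.sqrt 10 := by
    rw [← Real.sqrt_mul (by norm_num)]; norm_num
  simp only [Tmap, Qmap, PiLp.inner_apply, RCLike.inner_apply, conj_trivial,
    PiLp.smul_apply, Pi.smul_apply, smul_eq_mul, Fin.sum_univ_castSucc, Fin.snoc_castSucc, Fin.snoc_last]
  have hsum : ∑ i : Fin d, ((Real.sqrt 5)⁻¹ * (2 * q i)) * ((Real.sqrt 2)⁻¹ * x i)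
      = (Real.sqrt 2)⁻¹ * (Real.sqrt 5)⁻¹ * 2 * ∑ i : Fin d, q i * x i := by
    rw [Finset.mul_sum]; exact Finset.sum_congr rfl (fun i _ => by ring)
  rw [hsum, ← h10, mul_inv]
  ring

theorem stmt_3 (d : ℕ) (x x' q : EuclideanSpace ℝ (Fin d))
    (hx : ‖x‖ ≤ 1) (hx' : ‖x'‖ ≤ 1) (hq : ‖q‖ ≤ 1) :
    |‖q - x‖ - ‖q - x'‖| ≤
      2 * Real.sqrt |⟪Tmap d x, Qmap d q⟫ - ⟪Tmap d x', Qmap d q⟫| := by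
  set a := ‖q - x‖ with ha
  set b := ‖q - x'‖ with hb
  set ℓ₂ := |⟪Tmap d x, Qmap d q⟫ - ⟪Tmap d x', Qmap d q⟫| with hl2
  have hsqrt10 : (0:ℝ) < Real.sqrt 10 := Real.sqrt_pos.mpr (by norm_num)
  have hne := hsqrt10.ne'
  have hdiff : a ^ 2 - b ^ 2 =
      Real.sqrt 10 * (⟪Tmap d x', Qmap d q⟫ - ⟪Tmap d x, Qmap d q⟫) := by
    rw [inner_TQ, inner_TQ, ha, hb, norm_sub_sq_real q x, norm_sub_sq_real q x',
      real_inner_comm q x, real_inner_comm q x', mul_sub, ← mul_assoc,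
      mul_inv_cancel₀ hne, one_mul, ← mul_assoc, mul_inv_cancel₀ hne, one_mul]
    ring
  have ha0 : 0 ≤ a := norm_nonneg _
  have hb0 : 0 ≤ b := norm_nonneg _
  have key : |a - b| * (a + b) = Real.sqrt 10 * ℓ₂ := by
    calc |a - b| * (a + b) = |a - b| * |a + b| := by
          rw [abs_of_nonneg (add_nonneg ha0 hb0)]
    _ = |(a - b) * (a + b)| := (abs_mul _ _).symm
    _ = |a ^ 2 - b ^ 2| := by rw [show (a-b)*(a+b) = a^2-b^2 by ring]
    _ = Real.sqrt 10 * ℓ₂ := by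
          rw [hdiff, abs_mul, abs_of_pos hsqrt10, hl2, abs_sub_comm]
  have hle : |a - b| ≤ a + b := by
    calc |a - b| ≤ |a| + |b| := abs_sub _ _
    _ = a + b := by rw [abs_of_nonneg ha0, abs_of_nonneg hb0]
  have hl2nn : 0 ≤ ℓ₂ := abs_nonneg _
  have hsq : |a - b| ^ 2 ≤ 4 * ℓ₂ := by
    calc |a - b| ^ 2 = |a - b| * |a - b| := sq (|a-b|)
    _ ≤ |a - b| * (a + b) := mul_le_mul_of_nonneg_left hle (abs_nonneg _)
    _ = Real.sqrt 10 * ℓ₂ := key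
    _ ≤ 4 * ℓ₂ := by
        apply mul_le_mul_of_nonneg_right _ hl2nn
        rw [show (4:ℝ) = Real.sqrt 16 by
          rw [show (16:ℝ) = 4^2 by norm_num, Real.sqrt_sq (by norm_num)]]
        exact Real.sqrt_le_sqrt (by norm_num)
  calc |a - b| = Real.sqrt (|a - b| ^ 2) := (Real.sqrt_sq (abs_nonneg _)).symm
  _ ≤ Real.sqrt (4 * ℓ₂) := Real.sqrt_le_sqrt hsq
  _ = 2 * Real.sqrt ℓ₂ := by
      rw [Real.sqrt_mul (by norm_num), show Real.sqrt 4 = 2 by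
        rw [show (4:ℝ) = 2^2 by norm_num, Real.sqrt_sq (by norm_num)]]
end

section
/- Let p > 2 be real. For any x, x' ∈ [-1, 1], | |x|^p − Σ_{i=0}^{⌊p⌋} [p(p−1)⋯(p−i+1)/i!] · (x − x')^i · sign(x')^i · |x'|^{p−i} | ≤ (p·|x − x'|)^p. -/
open Finset Real
open scoped NNReal

noncomputable def Cc (q : ℝ) (i : ℕ) : ℝ :=
  (∏ j ∈ Finset.range i, (q - j)) / (Nat.factorial i)

noncomputable def Tay (q : ℝ) (k : ℕ) (b y : ℝ) : ℝ :=
  ∑ i ∈ Finset.range (k + 1), Cc q i * (y - b) ^ i * b ^ (q - i)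

noncomputable def Rr (q : ℝ) (k : ℕ) (b y : ℝ) : ℝ := y ^ q - Tay q k b y

lemma Cc_zero (q : ℝ) : Cc q 0 = 1 := by simp [Cc]

lemma Cc_one (q : ℝ) : Cc q 1 = q := by simp [Cc]

lemma Cc_nonneg {q : ℝ} {i : ℕ} (h : (i : ℝ) ≤ q) : 0 ≤ Cc q i := by
  apply div_nonneg _ (by positivity)
  apply Finset.prod_nonneg
  intro j hj
  simp only [Finset.mem_range] at hj
  have : (j : ℝ) + 1 ≤ i := by exact_mod_cast hj
  linarith

lemma prod_shift (q : ℝ) (i : ℕ) :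
    ∏ j ∈ Finset.range (i + 1), (q - j) = q * ∏ j ∈ Finset.range i, (q - 1 - j) := by
  rw [Finset.prod_range_succ']
  simp only [Nat.cast_add, Nat.cast_one, Nat.cast_zero, sub_zero]
  rw [mul_comm]
  congr 1
  exact Finset.prod_congr rfl fun j _ => by ring

/-- `(i+1) * Cc q (i+1) = q * Cc (q-1) i` -/
lemma Cc_succ_left (q : ℝ) (i : ℕ) : ((i : ℝ) + 1) * Cc q (i + 1) = q * Cc (q - 1) i := by
  have hf : (Nat.factorial (i + 1) : ℝ) = (i + 1) * Nat.factorial i := by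
    push_cast [Nat.factorial_succ]; ring
  rw [Cc, Cc, prod_shift, hf]
  have hi : (0:ℝ) < (i:ℝ) + 1 := by positivity
  field_simp

/-- `(i+1) * Cc q (i+1) = (q - i) * Cc q i` -/
lemma Cc_succ_right (q : ℝ) (i : ℕ) : ((i : ℝ) + 1) * Cc q (i + 1) = (q - i) * Cc q i := by
  have hf : (Nat.factorial (i + 1) : ℝ) = (i + 1) * Nat.factorial i := by
    push_cast [Nat.factorial_succ]; ring
  rw [Cc, Cc, Finset.prod_range_succ, hf]
  have hi : (0:ℝ) < (i:ℝ) + 1 := by positivity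
  field_simp

lemma abs_pow_sub_pow_le' {a c t : ℝ} (ha : |a| ≤ t) (hc : |c| ≤ t) :
    ∀ i : ℕ, |a ^ i - c ^ i| ≤ i * t ^ (i - 1) * |a - c|
  | 0 => by simp
  | (i + 1) => by
    have ht : 0 ≤ t := le_trans (abs_nonneg a) ha
    have ih := abs_pow_sub_pow_le' ha hc i
    have key : a ^ (i + 1) - c ^ (i + 1) = a * (a ^ i - c ^ i) + (a - c) * c ^ i := by ring
    rw [key]
    have h1 : |a * (a ^ i - c ^ i)| ≤ t * (i * t ^ (i - 1) * |a - c|) := by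
      rw [abs_mul]
      exact mul_le_mul ha ih (abs_nonneg _) ht
    have h2 : |(a - c) * c ^ i| ≤ |a - c| * t ^ i := by
      rw [abs_mul]
      apply mul_le_mul_of_nonneg_left _ (abs_nonneg _)
      calc |c ^ i| = |c| ^ i := abs_pow c i
        _ ≤ t ^ i := pow_le_pow_left₀ (abs_nonneg c) hc i
    have h3 : t * (i * t ^ (i - 1) * |a - c|) ≤ i * t ^ i * |a - c| := by
      rcases Nat.eq_zero_or_pos i with rfl | hi
      · simp
      · have : t * t ^ (i - 1) = t ^ i := by
          rw [← pow_succ']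
          congr 1
          omega
        calc t * (i * t ^ (i - 1) * |a - c|) = i * (t * t ^ (i - 1)) * |a - c| := by ring
          _ = i * t ^ i * |a - c| := by rw [this]
          _ ≤ i * t ^ i * |a - c| := le_refl _
    calc |a * (a ^ i - c ^ i) + (a - c) * c ^ i| ≤ |a * (a ^ i - c ^ i)| + |(a - c) * c ^ i| :=
          abs_add_le _ _
      _ ≤ i * t ^ i * |a - c| + |a - c| * t ^ i := by
          exact add_le_add (le_trans h1 h3) h2
      _ = (↑(i + 1)) * t ^ (i + 1 - 1) * |a - c| := by push_cast [Nat.add_sub_cancel]; ring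

lemma bern {β u s : ℝ} (hβ : 0 ≤ β) (hu : 0 ≤ u) (hs : 0 ≤ s) :
    (β + 1) * (u * s ^ β) ≤ (s + u) ^ (β + 1) := by
  rcases eq_or_lt_of_le hs with rfl | hs'
  · rcases eq_or_lt_of_le hβ with rfl | hβ'
    · simp [Real.rpow_one]
    · rw [Real.zero_rpow (ne_of_gt hβ')]
      simp only [mul_zero, zero_add]
      positivity
  · have h1 : (1:ℝ) ≤ β + 1 := by linarith
    have hb := one_add_mul_self_le_rpow_one_add
      (le_trans (by norm_num) (div_nonneg hu hs'.le)) h1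
    have hsp : (0:ℝ) < s ^ (β + 1) := Real.rpow_pos_of_pos hs' _
    have key : (1 + u / s) ^ (β + 1) * s ^ (β + 1) = (s + u) ^ (β + 1) := by
      rw [← Real.mul_rpow (by positivity) (le_of_lt hs')]
      congr 1
      field_simp
    have h2 : (1 + (β + 1) * (u / s)) * s ^ (β + 1) ≤ (s + u) ^ (β + 1) := by
      rw [← key]
      exact mul_le_mul_of_nonneg_right hb (le_of_lt hsp)
    have h3 : (β + 1) * (u * s ^ β) ≤ (1 + (β + 1) * (u / s)) * s ^ (β + 1) := by
      have hsb : s ^ (β + 1) = s ^ β * s := Real.rpow_add_one (ne_of_gt hs') β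
      rw [hsb]
      have : (1 + (β + 1) * (u / s)) * (s ^ β * s) =
          s ^ β * s + (β + 1) * (u * s ^ β) := by
        field_simp
      rw [this]
      have : 0 ≤ s ^ β * s := by positivity
      linarith
    linarith

-- superadditivity of rpow for p ≥ 1
lemma rpow_superadd {u s p : ℝ} (hu : 0 ≤ u) (hs : 0 ≤ s) (hp : 1 ≤ p) :
    u ^ p + s ^ p ≤ (u + s) ^ p := by
  have hp0 : p ≠ 0 := by linarith
  rcases eq_or_lt_of_le (add_nonneg hu hs) with h0 | hpos
  · have hu0 : u = 0 := by linarith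
    have hs0 : s = 0 := by linarith
    simp [hu0, hs0, Real.zero_rpow hp0]
  · have key : ∀ a : ℝ, 0 ≤ a → a ≤ u + s → a ^ p ≤ (u + s) ^ (p - 1) * a := by
      intro a ha hab
      rcases eq_or_lt_of_le ha with rfl | ha'
      · rw [Real.zero_rpow hp0]; simp
      · have : a ^ p = a ^ (p - 1) * a := by
          rw [← Real.rpow_add_one (ne_of_gt ha')]; ring_nf
        rw [this]
        exact mul_le_mul_of_nonneg_right (Real.rpow_le_rpow ha hab (by linarith)) ha
    have h1 := key u hu (by linarith)
    have h2 := key s hs (by linarith)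
    have h3 : (u + s) ^ (p - 1) * u + (u + s) ^ (p - 1) * s = (u + s) ^ p := by
      rw [← mul_add, ← Real.rpow_add_one (ne_of_gt hpos)]
      ring_nf
    linarith

-- Hölder: |y^q - b^q| ≤ |y-b|^q for 0 ≤ q ≤ 1
lemma rpow_holder {y b q : ℝ} (hy : 0 ≤ y) (hb : 0 ≤ b) (hq : 0 ≤ q) (hq1 : q ≤ 1) :
    |y ^ q - b ^ q| ≤ |y - b| ^ q := by
  have main : ∀ a c : ℝ, 0 ≤ c → c ≤ a → a ^ q - c ^ q ≤ (a - c) ^ q := by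
    intro a c hc hca
    have hac : 0 ≤ a - c := by linarith
    have := NNReal.rpow_add_le_add_rpow (a - c).toNNReal c.toNNReal hq hq1
    have hsum : (a - c).toNNReal + c.toNNReal = a.toNNReal := by
      ext
      simp [Real.toNNReal_of_nonneg hac, Real.toNNReal_of_nonneg hc,
        Real.toNNReal_of_nonneg (hc.trans hca)]
    rw [hsum] at this
    have := NNReal.coe_le_coe.mpr this
    push_cast [NNReal.coe_rpow] at this
    rw [Real.coe_toNNReal _ (hc.trans hca), Real.coe_toNNReal _ hac,
      Real.coe_toNNReal _ hc] at this
    linarith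
  have main2 : ∀ a c : ℝ, 0 ≤ c → c ≤ a → |a ^ q - c ^ q| ≤ |a - c| ^ q := by
    intro a c hc hca
    rw [abs_of_nonneg (by linarith : (0:ℝ) ≤ a - c),
      abs_of_nonneg (sub_nonneg.mpr (Real.rpow_le_rpow hc hca hq))]
    exact main a c hc hca
  rcases le_total b y with h | h
  · exact main2 y b hb h
  · rw [abs_sub_comm, abs_sub_comm y b]
    exact main2 b y hy h

lemma const_bound {p : ℝ} (hp : 2 < p) :
    1 + ∑ j ∈ Finset.range ⌊p⌋₊, Cc p j ≤ p ^ p := by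
  have hp0 : (0:ℝ) < p := by linarith
  have hp1 : (1:ℝ) ≤ p := by linarith
  rcases lt_or_ge p 3 with h3 | h3
  · -- 2 < p < 3, floor = 2
    have hn : ⌊p⌋₊ = 2 := by
      rw [Nat.floor_eq_iff (le_of_lt hp0)]
      norm_num
      constructor <;> linarith
    rw [hn, Finset.sum_range_succ, Finset.sum_range_one]
    have hc0 : Cc p 0 = 1 := by simp [Cc]
    have hc1 : Cc p 1 = p := by simp [Cc]
    rw [hc0, hc1]
    have hp2 : p ^ (2:ℝ) ≤ p ^ p :=
      Real.rpow_le_rpow_of_exponent_le hp1 (le_of_lt hp)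
    have hps : p ^ (2:ℝ) = p * p := by
      rw [show (2:ℝ) = ((2:ℕ):ℝ) by norm_num, Real.rpow_natCast]; ring
    have hmm : p * p ≤ p ^ p := by rw [← hps]; exact hp2
    calc (1:ℝ) + (1 + p) ≤ p * p := by nlinarith
      _ ≤ p ^ p := hmm
  · -- p ≥ 3
    have hsum : ∑ j ∈ Finset.range ⌊p⌋₊, Cc p j ≤ Real.exp p := by
      calc ∑ j ∈ Finset.range ⌊p⌋₊, Cc p j
          ≤ ∑ j ∈ Finset.range ⌊p⌋₊, p ^ j / (Nat.factorial j) := by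
            apply Finset.sum_le_sum
            intro j hj
            simp only [Finset.mem_range] at hj
            have hjp : (j:ℝ) ≤ p := by
              have h1 : (j:ℝ) < ⌊p⌋₊ := by exact_mod_cast hj
              have h2 := Nat.floor_le (le_of_lt hp0)
              linarith
            rw [Cc]
            apply div_le_div_of_nonneg_right ?_ (by positivity)
            calc ∏ l ∈ Finset.range j, (p - (l:ℝ)) ≤ ∏ _l ∈ Finset.range j, p := by
                  apply Finset.prod_le_prod
                  · intro l hl
                    simp only [Finset.mem_range] at hl
                    have : (l:ℝ) < j := by exact_mod_cast hl
                    linarith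
                  · intro l _
                    have : (0:ℝ) ≤ (l:ℝ) := Nat.cast_nonneg l
                    linarith
              _ = p ^ j := by rw [Finset.prod_const, Finset.card_range]
        _ ≤ Real.exp p := Real.sum_le_exp_of_nonneg (le_of_lt hp0) _
    have h3p : (1:ℝ) + Real.exp p ≤ (3:ℝ) ^ p := by
      have he1 : Real.exp 1 < 2.7182818286 := Real.exp_one_lt_d9
      have he1' : (1:ℝ) < Real.exp 1 := by
        have := Real.add_one_lt_exp (by norm_num : (1:ℝ) ≠ 0); linarith
      have hexp3 : Real.exp 3 < 26 := by
        have h33 : Real.exp 3 = Real.exp 1 ^ (3:ℕ) := by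
          rw [← Real.exp_nat_mul]; norm_num
        rw [h33]
        calc Real.exp 1 ^ (3:ℕ) < 2.7182818286 ^ (3:ℕ) :=
              pow_lt_pow_left₀ he1 (le_of_lt (Real.exp_pos 1)) (by norm_num)
          _ < 26 := by norm_num
      have hkey : (3:ℝ) ^ p ≥ Real.exp p * (27 / Real.exp 3) := by
        have h1 : (3:ℝ) ^ p = (Real.exp 1 * (3 / Real.exp 1)) ^ p := by
          congr 1
          field_simp
        rw [h1, Real.mul_rpow (le_of_lt (Real.exp_pos 1)) (by positivity),
          Real.exp_one_rpow]
        apply mul_le_mul_of_nonneg_left _ (le_of_lt (Real.exp_pos p))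
        have hbase : (1:ℝ) ≤ 3 / Real.exp 1 := by
          rw [le_div_iff₀ (Real.exp_pos 1)]
          nlinarith
        calc (27 / Real.exp 3 : ℝ) = (3 / Real.exp 1) ^ (3:ℝ) := by
              rw [Real.div_rpow (by norm_num) (le_of_lt (Real.exp_pos 1))]
              rw [show ((3:ℝ):ℝ) = ((3:ℕ):ℝ) by norm_num]
              rw [Real.rpow_natCast, Real.rpow_natCast, ← Real.exp_nat_mul]
              norm_num
          _ ≤ (3 / Real.exp 1) ^ p := Real.rpow_le_rpow_of_exponent_le hbase h3
      have hep : Real.exp 3 ≤ Real.exp p := Real.exp_le_exp.mpr h3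
      have hexp3pos := Real.exp_pos 3
      have hc : (0:ℝ) ≤ (27 - Real.exp 3) / Real.exp 3 :=
        div_nonneg (by linarith) (le_of_lt hexp3pos)
      have h2 : Real.exp 3 * ((27 - Real.exp 3) / Real.exp 3) ≤
          Real.exp p * ((27 - Real.exp 3) / Real.exp 3) :=
        mul_le_mul_of_nonneg_right hep hc
      have h3' : Real.exp 3 * ((27 - Real.exp 3) / Real.exp 3) = 27 - Real.exp 3 := by
        field_simp
      have h4 : Real.exp p * (27 / Real.exp 3) =
          Real.exp p + Real.exp p * ((27 - Real.exp 3) / Real.exp 3) := by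
        field_simp
        ring
      linarith
    have hpp : (3:ℝ) ^ p ≤ p ^ p := Real.rpow_le_rpow (by norm_num) h3 (le_of_lt hp0)
    linarith

lemma cont_rpow (q : ℝ) (hq : 0 ≤ q) : Continuous fun y : ℝ => y ^ q := by
  rw [continuous_iff_continuousAt]
  intro x
  exact Real.continuousAt_rpow_const x q (Or.inr hq)

lemma cont_Tay (q : ℝ) (k : ℕ) (b : ℝ) : Continuous fun y => Tay q k b y := by
  unfold Tay
  apply continuous_finset_sum
  intro i _
  exact (continuous_const.mul ((continuous_id.sub continuous_const).pow i)).mul continuous_const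

lemma Tay_self (q : ℝ) (k : ℕ) (b : ℝ) : Tay q k b b = b ^ q := by
  rw [Tay, Finset.sum_eq_single 0]
  · simp [Cc]
  · intro i _ hi
    rw [sub_self, zero_pow hi]
    ring
  · intro h
    exact absurd (Finset.mem_range.mpr (Nat.succ_pos k)) h

lemma Rr_self (q : ℝ) (k : ℕ) (b : ℝ) : Rr q k b b = 0 := by
  rw [Rr, Tay_self, sub_self]

lemma hasDerivAt_Tay (q : ℝ) (k : ℕ) (b y : ℝ) :
    HasDerivAt (fun z => Tay q (k + 1) b z) (q * Tay (q - 1) k b y) y := by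
  have h : ∀ i ∈ Finset.range (k + 2), HasDerivAt
      (fun z => Cc q i * (z - b) ^ i * b ^ (q - i))
      (Cc q i * ((i : ℝ) * (y - b) ^ (i - 1)) * b ^ (q - i)) y := by
    intro i _
    have h1 : HasDerivAt (fun z : ℝ => (z - b) ^ i) ((i : ℝ) * (y - b) ^ (i - 1)) y := by
      have := ((hasDerivAt_id y).sub_const b).fun_pow i
      simpa using this
    exact (h1.const_mul (Cc q i)).mul_const _
  have hsum := HasDerivAt.fun_sum h
  have heq : ∑ i ∈ Finset.range (k + 2),
      Cc q i * ((i : ℝ) * (y - b) ^ (i - 1)) * b ^ (q - i) = q * Tay (q - 1) k b y := by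
    rw [Finset.sum_range_succ']
    simp only [Nat.cast_zero, zero_mul, mul_zero, zero_mul, add_zero]
    rw [Tay, Finset.mul_sum]
    apply Finset.sum_congr rfl
    intro i _
    have hcast : q - (↑(i + 1) : ℝ) = q - 1 - (i : ℝ) := by push_cast; ring
    have hCc := Cc_succ_left q i
    rw [hcast]
    have : Cc q (i + 1) * ((↑(i + 1) : ℝ) * (y - b) ^ (i + 1 - 1)) * b ^ (q - 1 - (i:ℝ)) =
        (((i:ℝ) + 1) * Cc q (i + 1)) * (y - b) ^ i * b ^ (q - 1 - (i:ℝ)) := by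
      push_cast
      ring
    rw [this, hCc]
    ring
  rw [← heq]
  exact hsum

lemma mvt_bound {g g' : ℝ → ℝ} {b y q : ℝ} (hq : 1 ≤ q) (hy : 0 ≤ y) (hb : 0 < b)
    (hcont : ContinuousOn g (Set.uIcc y b))
    (hder : ∀ ξ ∈ Set.Ioo (min y b) (max y b), HasDerivAt g (g' ξ) ξ)
    (hbnd : ∀ ξ ∈ Set.Ioo (min y b) (max y b), |g' ξ| ≤ q * |ξ - b| ^ (q - 1))
    (hgb : g b = 0) : |g y| ≤ |y - b| ^ q := by
  have hq0 : (0:ℝ) < q := by linarith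
  rcases le_total y b with hyb | hby
  · -- y ≤ b
    have huIcc : Set.uIcc y b = Set.Icc y b := Set.uIcc_of_le hyb
    have hmin : min y b = y := min_eq_left hyb
    have hmax : max y b = b := max_eq_right hyb
    have hφcont : Continuous fun ξ : ℝ => (b - ξ) ^ q :=
      (cont_rpow q hq0.le).comp (continuous_const.sub continuous_id)
    have hφder : ∀ ξ : ℝ, HasDerivAt (fun ζ : ℝ => (b - ζ) ^ q)
        (-1 * q * (b - ξ) ^ (q - 1)) ξ := by
      intro ξ
      have h1 : HasDerivAt (fun ζ : ℝ => b - ζ) (-1) ξ := by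
        simpa using (hasDerivAt_id ξ).const_sub b
      exact h1.rpow_const (Or.inr hq)
    have key : ∀ f f' : ℝ → ℝ, ContinuousOn f (Set.Icc y b) →
        (∀ ξ ∈ Set.Ioo y b, HasDerivAt f (f' ξ) ξ) →
        (∀ ξ ∈ Set.Ioo y b, |f' ξ| ≤ q * |ξ - b| ^ (q - 1)) →
        f b = 0 → f y ≤ (b - y) ^ q := by
      intro f f' hfc hfd hfbnd hfb
      have hmono : MonotoneOn (fun ξ => f ξ - (b - ξ) ^ q) (Set.Icc y b) := by
        apply monotoneOn_of_hasDerivWithinAt_nonneg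
          (f' := fun ξ => f' ξ + q * (b - ξ) ^ (q - 1)) (convex_Icc y b)
        · exact hfc.sub hφcont.continuousOn
        · intro ξ hξ
          rw [interior_Icc] at hξ
          have h2 := (hfd ξ hξ).sub (hφder ξ)
          have harr : f' ξ - -1 * q * (b - ξ) ^ (q - 1) = f' ξ + q * (b - ξ) ^ (q - 1) := by
            ring
          rw [harr] at h2
          exact h2.hasDerivWithinAt
        · intro ξ hξ
          rw [interior_Icc] at hξ
          have hbd := hfbnd ξ hξ
          have habs : |ξ - b| = b - ξ := by
            rw [abs_of_nonpos (by linarith [hξ.2] : ξ - b ≤ 0)]; ring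
          rw [habs] at hbd
          have := neg_abs_le (f' ξ)
          linarith
      have h1 := hmono (Set.left_mem_Icc.mpr hyb) (Set.right_mem_Icc.mpr hyb) hyb
      simp only [sub_self] at h1
      rw [Real.zero_rpow (ne_of_gt hq0), hfb, sub_zero] at h1
      linarith [h1]
    have hcont' : ContinuousOn g (Set.Icc y b) := by rwa [huIcc] at hcont
    have hub := key g g' hcont'
      (fun ξ hξ => hder ξ (by rw [hmin, hmax]; exact hξ))
      (fun ξ hξ => hbnd ξ (by rw [hmin, hmax]; exact hξ)) hgb
    have hlb := key (fun ξ => -g ξ) (fun ξ => -(g' ξ)) hcont'.neg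
      (fun ξ hξ => (hder ξ (by rw [hmin, hmax]; exact hξ)).neg)
      (fun ξ hξ => by rw [abs_neg]; exact hbnd ξ (by rw [hmin, hmax]; exact hξ))
      (by simp [hgb])
    have habs : |y - b| = b - y := by
      rw [abs_of_nonpos (by linarith : y - b ≤ 0)]; ring
    rw [habs, abs_le]
    constructor
    · linarith
    · exact hub
  · -- b ≤ y
    have huIcc : Set.uIcc y b = Set.Icc b y := Set.uIcc_of_ge hby
    have hmin : min y b = b := min_eq_right hby
    have hmax : max y b = y := max_eq_left hby
    have hφcont : Continuous fun ξ : ℝ => (ξ - b) ^ q :=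
      (cont_rpow q hq0.le).comp (continuous_id.sub continuous_const)
    have hφder : ∀ ξ : ℝ, HasDerivAt (fun ζ : ℝ => (ζ - b) ^ q)
        (1 * q * (ξ - b) ^ (q - 1)) ξ := by
      intro ξ
      have h1 : HasDerivAt (fun ζ : ℝ => ζ - b) 1 ξ := by
        simpa using (hasDerivAt_id ξ).sub_const b
      exact h1.rpow_const (Or.inr hq)
    have key : ∀ f f' : ℝ → ℝ, ContinuousOn f (Set.Icc b y) →
        (∀ ξ ∈ Set.Ioo b y, HasDerivAt f (f' ξ) ξ) →
        (∀ ξ ∈ Set.Ioo b y, |f' ξ| ≤ q * |ξ - b| ^ (q - 1)) →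
        f b = 0 → f y ≤ (y - b) ^ q := by
      intro f f' hfc hfd hfbnd hfb
      have hanti : AntitoneOn (fun ξ => f ξ - (ξ - b) ^ q) (Set.Icc b y) := by
        apply antitoneOn_of_hasDerivWithinAt_nonpos
          (f' := fun ξ => f' ξ - q * (ξ - b) ^ (q - 1)) (convex_Icc b y)
        · exact hfc.sub hφcont.continuousOn
        · intro ξ hξ
          rw [interior_Icc] at hξ
          have h2 := (hfd ξ hξ).sub (hφder ξ)
          have harr : f' ξ - 1 * q * (ξ - b) ^ (q - 1) = f' ξ - q * (ξ - b) ^ (q - 1) := by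
            ring
          rw [harr] at h2
          exact h2.hasDerivWithinAt
        · intro ξ hξ
          rw [interior_Icc] at hξ
          have hbd := hfbnd ξ hξ
          have habs : |ξ - b| = ξ - b := abs_of_nonneg (by linarith [hξ.1])
          rw [habs] at hbd
          have := le_abs_self (f' ξ)
          linarith
      have h1 := hanti (Set.left_mem_Icc.mpr hby) (Set.right_mem_Icc.mpr hby) hby
      simp only [sub_self] at h1
      rw [Real.zero_rpow (ne_of_gt hq0), hfb, sub_zero] at h1
      linarith [h1]
    have hcont' : ContinuousOn g (Set.Icc b y) := by rwa [huIcc] at hcont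
    have hub := key g g' hcont'
      (fun ξ hξ => hder ξ (by rw [hmin, hmax]; exact hξ))
      (fun ξ hξ => hbnd ξ (by rw [hmin, hmax]; exact hξ)) hgb
    have hlb := key (fun ξ => -g ξ) (fun ξ => -(g' ξ)) hcont'.neg
      (fun ξ hξ => (hder ξ (by rw [hmin, hmax]; exact hξ)).neg)
      (fun ξ hξ => by rw [abs_neg]; exact hbnd ξ (by rw [hmin, hmax]; exact hξ))
      (by simp [hgb])
    have habs : |y - b| = y - b := abs_of_nonneg (by linarith)
    rw [habs, abs_le]
    constructor
    · linarith
    · exact hub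

lemma caseA : ∀ (k : ℕ) (q : ℝ), (k:ℝ) ≤ q → q ≤ (k:ℝ) + 1 → ∀ b y : ℝ, 0 < b → 0 ≤ y →
    |Rr q k b y| ≤ |y - b| ^ q := by
  intro k
  induction k with
  | zero =>
    intro q h0 h1 b y hb hy
    have hR : Rr q 0 b y = y ^ q - b ^ q := by
      rw [Rr, Tay, Finset.sum_range_one]
      simp [Cc]
    rw [hR]
    exact rpow_holder hy hb.le (by exact_mod_cast h0) (by simpa using h1)
  | succ k ih =>
    intro q hk hk1 b y hb hy
    have hq1 : (1:ℝ) ≤ q := by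
      have : (0:ℝ) ≤ (k:ℝ) := Nat.cast_nonneg k
      push_cast at hk
      linarith
    apply mvt_bound (g' := fun ξ => q * Rr (q - 1) k b ξ) hq1 hy hb
    · exact ((cont_rpow q (by linarith)).sub (cont_Tay q (k+1) b)).continuousOn
    · intro ξ hξ
      have hξ0 : 0 < ξ := lt_of_le_of_lt (le_min hy hb.le) hξ.1
      have hrp : HasDerivAt (fun z : ℝ => z ^ q) (q * ξ ^ (q - 1)) ξ :=
        Real.hasDerivAt_rpow_const (Or.inl (ne_of_gt hξ0))
      have := hrp.sub (hasDerivAt_Tay q k b ξ)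
      have harr : q * ξ ^ (q - 1) - q * Tay (q - 1) k b ξ = q * Rr (q - 1) k b ξ := by
        rw [Rr]; ring
      rw [harr] at this
      exact this
    · intro ξ hξ
      have hξ0 : 0 ≤ ξ := by
        have h1 : min y b ≤ ξ := le_of_lt hξ.1
        have : 0 ≤ min y b := le_min hy hb.le
        linarith
      rw [abs_mul, abs_of_pos (by linarith : (0:ℝ) < q)]
      apply mul_le_mul_of_nonneg_left _ (by linarith : (0:ℝ) ≤ q)
      apply ih (q - 1) (by push_cast at hk ⊢; linarith) (by push_cast at hk1 ⊢; linarith) b ξ hb hξ0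
    · exact Rr_self q (k+1) b

lemma core {p : ℝ} (hp : 2 < p) (x b : ℝ) (hb : 0 < b) :
    |(|x|) ^ p - Tay p ⌊p⌋₊ b x| ≤ (p * |x - b|) ^ p := by
  set n := ⌊p⌋₊ with hn
  have hp0 : (0:ℝ) < p := by linarith
  have hp1 : (1:ℝ) ≤ p := by linarith
  have hnp : (n:ℝ) ≤ p := Nat.floor_le hp0.le
  have hpn1 : p ≤ (n:ℝ) + 1 := (Nat.lt_floor_add_one p).le
  have hmul : (p * |x - b|) ^ p = p ^ p * |x - b| ^ p :=
    Real.mul_rpow hp0.le (abs_nonneg _)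
  have hpp1 : (1:ℝ) ≤ p ^ p := Real.one_le_rpow hp1 hp0.le
  rcases le_or_gt 0 x with hx | hx
  · -- 0 ≤ x : direct Taylor remainder
    rw [abs_of_nonneg hx]
    have h1 : |Rr p n b x| ≤ |x - b| ^ p := caseA n p hnp hpn1 b x hb hx
    rw [Rr] at h1
    rw [hmul]
    have h2 : (0:ℝ) ≤ |x - b| ^ p := Real.rpow_nonneg (abs_nonneg _) p
    nlinarith
  · -- x < 0
    set u := -x with hu
    set t := b - x with ht
    have hu0 : 0 < u := by simp [hu]; linarith
    have ht0 : 0 < t := by simp [ht]; linarith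
    have htu : t = b + u := by rw [ht, hu]; ring
    have habsx : |x| = u := by rw [abs_of_neg hx]
    have habsxb : |x - b| = t := by rw [abs_of_neg (by linarith : x - b < 0)]; ring
    -- bound on |Tay p n b 0|
    have h0 : |Tay p n b 0| ≤ b ^ p := by
      have h1 := caseA n p hnp hpn1 b 0 hb le_rfl
      rw [Rr, Real.zero_rpow (ne_of_gt hp0), zero_sub, abs_neg] at h1
      rw [zero_sub, abs_neg, abs_of_pos hb] at h1
      exact h1
    -- bound on |Tay p n b x - Tay p n b 0|
    have hM : |Tay p n b x - Tay p n b 0| ≤ (∑ j ∈ Finset.range n, Cc p j) * t ^ p := by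
      have hexpand : Tay p n b x - Tay p n b 0 =
          ∑ i ∈ Finset.range (n + 1), Cc p i * ((x - b) ^ i - (0 - b) ^ i) * b ^ (p - i) := by
        rw [Tay, Tay, ← Finset.sum_sub_distrib]
        exact Finset.sum_congr rfl fun i _ => by ring
      rw [hexpand]
      calc |∑ i ∈ Finset.range (n + 1), Cc p i * ((x - b) ^ i - (0 - b) ^ i) * b ^ (p - i)|
          ≤ ∑ i ∈ Finset.range (n + 1), |Cc p i * ((x - b) ^ i - (0 - b) ^ i) * b ^ (p - i)| :=
            Finset.abs_sum_le_sum_abs _ _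
        _ ≤ ∑ i ∈ Finset.range (n + 1), Cc p i * ((i : ℝ) * t ^ (i - 1) * u) * b ^ (p - i) := by
            apply Finset.sum_le_sum
            intro i hi
            simp only [Finset.mem_range] at hi
            have hip : (i : ℝ) ≤ p := by
              have : (i : ℝ) ≤ (n : ℝ) := by exact_mod_cast Nat.lt_succ_iff.mp hi
              linarith
            have hCc : 0 ≤ Cc p i := Cc_nonneg hip
            have hbp : (0:ℝ) < b ^ (p - i) := Real.rpow_pos_of_pos hb _
            rw [abs_mul, abs_mul, abs_of_nonneg hCc, abs_of_pos hbp]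
            apply mul_le_mul_of_nonneg_right _ hbp.le
            apply mul_le_mul_of_nonneg_left _ hCc
            have hdiff := abs_pow_sub_pow_le'
              (show |x - b| ≤ t by rw [habsxb])
              (show |0 - b| ≤ t by
                rw [zero_sub, abs_neg, abs_of_pos hb]; linarith) i
            have : (x - b) - (0 - b) = x := by ring
            rw [this] at hdiff
            rw [habsx] at hdiff
            exact hdiff
        _ ≤ (∑ j ∈ Finset.range n, Cc p j) * t ^ p := by
            rw [Finset.sum_range_succ']
            simp only [Nat.cast_zero, zero_mul, mul_zero, zero_mul, add_zero]
            rw [Finset.sum_mul]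
            apply Finset.sum_le_sum
            intro j hj
            simp only [Finset.mem_range] at hj
            have hjp : (j : ℝ) + 1 ≤ p := by
              have : (j : ℝ) + 1 ≤ (n : ℝ) := by exact_mod_cast hj
              linarith
            have hCcj : 0 ≤ Cc p j := Cc_nonneg (by linarith [Nat.cast_nonneg (α := ℝ) j])
            have hβ : (0:ℝ) ≤ p - (↑(j + 1)) := by push_cast; linarith
            have hbern := bern hβ hu0.le hb.le
            have hcast : p - (↑(j + 1) : ℝ) + 1 = p - j := by push_cast; ring
            rw [hcast, ← htu] at hbern
            -- hbern : (p - j) * (u * b ^ (p - ↑(j+1))) ≤ t ^ (p - j)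
            have hCs := Cc_succ_right p j
            have hterm : Cc p (j + 1) * ((↑(j + 1) : ℝ) * t ^ (j + 1 - 1) * u) * b ^ (p - ↑(j + 1))
                = Cc p j * t ^ j * ((p - j) * (u * b ^ (p - ↑(j + 1)))) := by
              have h2 : ((j:ℝ) + 1) * Cc p (j + 1) = (p - j) * Cc p j := hCs
              push_cast
              push_cast at h2
              linear_combination t ^ j * u * b ^ (p - ((j:ℝ) + 1)) * h2
            rw [hterm]
            have hfinal : (p - (j:ℝ)) * (u * b ^ (p - ↑(j + 1))) ≤ t ^ (p - (j:ℝ)) := hbern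
            calc Cc p j * t ^ j * ((p - (j:ℝ)) * (u * b ^ (p - ↑(j + 1))))
                ≤ Cc p j * t ^ j * t ^ (p - (j:ℝ)) := by
                  apply mul_le_mul_of_nonneg_left hfinal
                  positivity
              _ = Cc p j * t ^ p := by
                  rw [mul_assoc]
                  congr 1
                  rw [← Real.rpow_natCast t j, ← Real.rpow_add ht0]
                  congr 1
                  ring
    -- combine everything
    have hA : (0:ℝ) ≤ u ^ p := Real.rpow_nonneg hu0.le p
    have htri : |(|x|) ^ p - Tay p n b x| ≤
        u ^ p + |Tay p n b x - Tay p n b 0| + |Tay p n b 0| := by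
      rw [habsx]
      have hsplit : u ^ p - Tay p n b x =
          u ^ p + (-(Tay p n b x - Tay p n b 0)) + (-(Tay p n b 0)) := by ring
      rw [hsplit]
      calc |u ^ p + (-(Tay p n b x - Tay p n b 0)) + (-(Tay p n b 0))|
          ≤ |u ^ p| + |(-(Tay p n b x - Tay p n b 0))| + |(-(Tay p n b 0))| :=
            abs_add_three _ _ _
        _ = u ^ p + |Tay p n b x - Tay p n b 0| + |Tay p n b 0| := by
            rw [abs_neg, abs_neg, abs_of_nonneg hA]
    have hsup : u ^ p + b ^ p ≤ t ^ p := by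
      have := rpow_superadd hu0.le hb.le hp1
      rw [show u + b = t by rw [htu]; ring] at this
      exact this
    have htp : (0:ℝ) ≤ t ^ p := Real.rpow_nonneg ht0.le p
    have hconst := const_bound hp
    rw [habsxb] at hmul ⊢
    rw [hmul]
    have hfin := mul_le_mul_of_nonneg_right hconst htp
    calc |(|x|) ^ p - Tay p n b x|
        ≤ u ^ p + |Tay p n b x - Tay p n b 0| + |Tay p n b 0| := htri
      _ ≤ u ^ p + (∑ j ∈ Finset.range n, Cc p j) * t ^ p + b ^ p := by
          have := hM
          have := h0
          linarith
      _ ≤ (1 + ∑ j ∈ Finset.range n, Cc p j) * t ^ p := by nlinarith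
      _ ≤ p ^ p * t ^ p := hfin

theorem stmt_5 (p : ℝ) (hp : 2 < p) (x x' : ℝ)
    (hx : x ∈ Set.Icc (-1 : ℝ) 1) (hx' : x' ∈ Set.Icc (-1 : ℝ) 1) :
    abs (|x| ^ p - ∑ i ∈ Finset.range (⌊p⌋₊ + 1),
        (∏ j ∈ Finset.range i, (p - j)) / (Nat.factorial i) *
          (x - x') ^ i * (Real.sign x') ^ i * |x'| ^ (p - i)) ≤
      (p * |x - x'|) ^ p := by
  have hp0 : (0:ℝ) < p := by linarith
  have hp1 : (1:ℝ) ≤ p := by linarith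
  rcases lt_trichotomy x' 0 with hneg | hzero | hpos
  · -- x' < 0 : reduce to core with (-x, -x')
    have hsum : ∑ i ∈ Finset.range (⌊p⌋₊ + 1),
        (∏ j ∈ Finset.range i, (p - j)) / (Nat.factorial i) *
          (x - x') ^ i * (Real.sign x') ^ i * |x'| ^ (p - i) =
        Tay p ⌊p⌋₊ (-x') (-x) := by
      rw [Tay]
      apply Finset.sum_congr rfl
      intro i _
      rw [Real.sign_of_neg hneg, abs_of_neg hneg, Cc]
      have hpowi : (x - x') ^ i * (-1 : ℝ) ^ i = (-x - -x') ^ i := by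
        rw [← mul_pow]
        congr 1
        ring
      calc (∏ j ∈ Finset.range i, (p - j)) / (Nat.factorial i) *
            (x - x') ^ i * (-1 : ℝ) ^ i * (-x') ^ (p - i)
          = (∏ j ∈ Finset.range i, (p - j)) / (Nat.factorial i) *
            ((x - x') ^ i * (-1 : ℝ) ^ i) * (-x') ^ (p - i) := by ring
        _ = (∏ j ∈ Finset.range i, (p - j)) / (Nat.factorial i) *
            (-x - -x') ^ i * (-x') ^ (p - i) := by rw [hpowi]
    rw [hsum]
    have hcore := core hp (-x) (-x') (by linarith)
    rw [abs_neg, show -x - -x' = -(x - x') by ring, abs_neg] at hcore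
    exact hcore
  · -- x' = 0
    subst hzero
    have hsum : ∑ i ∈ Finset.range (⌊p⌋₊ + 1),
        (∏ j ∈ Finset.range i, (p - j)) / (Nat.factorial i) *
          (x - 0) ^ i * (Real.sign 0) ^ i * |(0:ℝ)| ^ (p - i) = 0 := by
      apply Finset.sum_eq_zero
      intro i _
      rcases Nat.eq_zero_or_pos i with rfl | hi
      · simp [Real.zero_rpow (ne_of_gt hp0)]
      · rw [Real.sign_zero, zero_pow (Nat.pos_iff_ne_zero.mp hi)]
        ring
    rw [hsum, sub_zero, sub_zero]
    have h1 : |(|x|) ^ p| = |x| ^ p := abs_of_nonneg (Real.rpow_nonneg (abs_nonneg x) p)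
    rw [h1]
    apply Real.rpow_le_rpow (abs_nonneg x) _ hp0.le
    nlinarith [abs_nonneg x]
  · -- x' > 0
    have hsum : ∑ i ∈ Finset.range (⌊p⌋₊ + 1),
        (∏ j ∈ Finset.range i, (p - j)) / (Nat.factorial i) *
          (x - x') ^ i * (Real.sign x') ^ i * |x'| ^ (p - i) =
        Tay p ⌊p⌋₊ x' x := by
      rw [Tay]
      apply Finset.sum_congr rfl
      intro i _
      rw [Real.sign_of_pos hpos, abs_of_pos hpos, one_pow, mul_one, Cc]
    rw [hsum]
    exact core hp x x' hpos
end

section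
/- Let S ⊂ ℝ^d be a compact convex set with nonempty interior and v a unit vector. If the width of S in direction v (i.e., max_{u∈S}⟨v,u⟩ − min_{u∈S}⟨v,u⟩) is at least 8dε, then for every real c, the volume of the strip S ∩ {z : c ≤ ⟨v,z⟩ ≤ c+ε} is at most (1/4)·Vol(S). -/
open scoped RealInnerProductSpace
open MeasureTheory
open scoped ENNReal

lemma hplane {d : ℕ} (v : EuclideanSpace ℝ (Fin d)) (hv : v ≠ 0) (c : ℝ) :
    volume {z : EuclideanSpace ℝ (Fin d) | ⟪v, z⟫ = c} = 0 := by
  set K := LinearMap.ker (innerSL ℝ v).toLinearMap with hK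
  have hKne : K ≠ ⊤ := by
    intro h
    have : ⟪v, v⟫ = 0 := by
      have := h ▸ (Submodule.mem_top (x := v))
      simpa [hK, LinearMap.mem_ker] using this
    exact hv (inner_self_eq_zero.mp this)
  have h0 : volume (K : Set (EuclideanSpace ℝ (Fin d))) = 0 :=
    MeasureTheory.Measure.addHaar_submodule volume K hKne
  set x₀ : EuclideanSpace ℝ (Fin d) := (c / ‖v‖ ^ 2) • v with hx₀
  have hfx₀ : ⟪v, x₀⟫ = c := by
    rw [hx₀, real_inner_smul_right, real_inner_self_eq_norm_sq]
    field_simp [norm_ne_zero_iff.mpr hv]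
  have hset : {z : EuclideanSpace ℝ (Fin d) | ⟪v, z⟫ = c}
      = (fun z => z + (-x₀)) ⁻¹' (K : Set (EuclideanSpace ℝ (Fin d))) := by
    ext z
    simp only [Set.mem_setOf_eq, Set.mem_preimage, SetLike.mem_coe, hK, LinearMap.mem_ker,
      ContinuousLinearMap.coe_coe, innerSL_apply_apply, ← sub_eq_add_neg, inner_sub_right, hfx₀]
    constructor <;> intro h <;> linarith
  rw [hset, measure_preimage_add_right volume (-x₀) _]
  exact h0

lemma key {d : ℕ} {S : Set (EuclideanSpace ℝ (Fin d))} (hScomp : IsCompact S)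
    (hSconv : Convex ℝ S) {v : EuclideanSpace ℝ (Fin d)} (hv : ‖v‖ = 1) {ε : ℝ}
    (hε : 0 < ε) (c : ℝ) {p : EuclideanSpace ℝ (Fin d)} (hp : p ∈ S)
    (hpmax : ∀ x ∈ S, ⟪v, x⟫ ≤ ⟪v, p⟫)
    (ha : (4 * d - 1) * ε ≤ ⟪v, p⟫ - (c + ε)) :
    volume (S ∩ {z | c ≤ ⟪v, z⟫ ∧ ⟪v, z⟫ ≤ c + ε}) ≤ (1 / 4 : ℝ≥0∞) * volume S := by
  have hvne : v ≠ 0 := by intro h; rw [h, norm_zero] at hv; norm_num at hv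
  have hd : 1 ≤ d := by
    by_contra h
    have hd0 : d = 0 := by omega
    subst hd0
    exact hvne (Subsingleton.elim v 0)
  have hd' : (1 : ℝ) ≤ d := by exact_mod_cast hd
  set M : ℝ := ⟪v, p⟫ with hM
  set a : ℝ := M - c - ε with haa
  have ha' : (4 * d - 1) * ε ≤ a := by rw [haa]; linarith
  have ha0 : 0 < a := lt_of_lt_of_le (by nlinarith) ha'
  set r : ℝ := a / (a + ε) with hr
  have haε : 0 < a + ε := by linarith
  have hr0 : 0 < r := div_pos ha0 haε
  have hr1 : r < 1 := (div_lt_one haε).mpr (by linarith)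
  -- the family of strips
  set T : ℕ → Set (EuclideanSpace ℝ (Fin d)) := fun k =>
    S ∩ {z | M - r ^ k * (a + ε) < ⟪v, z⟫ ∧ ⟪v, z⟫ ≤ M - r ^ k * a} with hT
  have hfcont : Continuous fun z : EuclideanSpace ℝ (Fin d) => ⟪v, z⟫ :=
    continuous_const.inner continuous_id
  have hTmeas : ∀ k, MeasurableSet (T k) := by
    intro k
    refine hScomp.measurableSet.inter ?_
    have : {z : EuclideanSpace ℝ (Fin d) | M - r ^ k * (a + ε) < ⟪v, z⟫ ∧ ⟪v, z⟫ ≤ M - r ^ k * a}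
        = (fun z => ⟪v, z⟫) ⁻¹' Set.Ioc (M - r ^ k * (a + ε)) (M - r ^ k * a) := rfl
    rw [this]
    exact (hfcont.measurable) measurableSet_Ioc
  -- pairwise disjointness
  have hTdisj : Pairwise (Function.onFun Disjoint T) := by
    refine (pairwise_disjoint_on T).2 fun j k hjk => ?_
    refine Set.disjoint_left.mpr fun z hzj hzk => ?_
    have h1 : ⟪v, z⟫ ≤ M - r ^ j * a := hzj.2.2
    have h2 : M - r ^ k * (a + ε) < ⟪v, z⟫ := hzk.2.1
    have hkey : r ^ k * (a + ε) ≤ r ^ j * a := by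
      have : r ^ k * (a + ε) = r ^ (k - 1) * a := by
        have hk : k = (k - 1) + 1 := by omega
        rw [hk, pow_succ, mul_assoc]
        congr 1
        rw [hr]; field_simp
      rw [this]
      have : r ^ (k - 1) ≤ r ^ j :=
        pow_le_pow_of_le_one (le_of_lt hr0) (le_of_lt hr1) (by omega)
      nlinarith
    linarith
  -- scaled copies
  have hscale : ∀ k, ENNReal.ofReal ((r ^ d) ^ k) * volume (T 0) ≤ volume (T k) := by
    intro k
    set t : ℝ := r ^ k with ht
    have ht0 : 0 < t := pow_pos hr0 k
    have ht1 : t ≤ 1 := pow_le_one₀ (le_of_lt hr0) (le_of_lt hr1)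
    have himg : (AffineMap.homothety p t) '' T 0 ⊆ T k := by
      rintro _ ⟨x, ⟨hxS, hx1, hx2⟩, rfl⟩
      have hform : AffineMap.homothety p t x = t • x + (1 - t) • p := by
        simp only [AffineMap.homothety_apply, vsub_eq_sub, vadd_eq_add, smul_sub]
        module
      have hmem : AffineMap.homothety p t x ∈ S := by
        rw [hform]
        exact hSconv hxS hp (le_of_lt ht0) (by linarith) (by ring)
      have hinner : ⟪v, AffineMap.homothety p t x⟫ = t * ⟪v, x⟫ + (1 - t) * M := by
        rw [hform, inner_add_right, real_inner_smul_right, real_inner_smul_right, hM]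
      refine ⟨hmem, ?_, ?_⟩
      · rw [hinner]
        simp only [pow_zero, one_mul] at hx1 hx2
        nlinarith
      · rw [hinner]
        simp only [pow_zero, one_mul] at hx1 hx2
        nlinarith
    calc ENNReal.ofReal ((r ^ d) ^ k) * volume (T 0)
        = volume ((AffineMap.homothety p t) '' T 0) := by
          rw [MeasureTheory.Measure.addHaar_image_homothety]
          congr 2
          rw [abs_of_nonneg (by positivity), finrank_euclideanSpace_fin, ht]
          ring
      _ ≤ volume (T k) := measure_mono himg
  -- sum up
  set q : ℝ≥0∞ := ENNReal.ofReal (r ^ d) with hq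
  have hrd1 : r ^ d < 1 := pow_lt_one₀ (le_of_lt hr0) hr1 (by omega)
  have hq1 : q < 1 := ENNReal.ofReal_lt_one.mpr hrd1
  -- the union is inside S
  have hUsub : (⋃ k, T k) ⊆ S := Set.iUnion_subset fun k => Set.inter_subset_left
  have hsum : (1 - q)⁻¹ * volume (T 0) ≤ volume S := by
    calc (1 - q)⁻¹ * volume (T 0) = (∑' k : ℕ, q ^ k) * volume (T 0) := by
          rw [ENNReal.tsum_geometric]
      _ = ∑' k : ℕ, q ^ k * volume (T 0) := by rw [ENNReal.tsum_mul_right]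
      _ ≤ ∑' k : ℕ, volume (T k) := by
          refine ENNReal.tsum_le_tsum fun k => ?_
          have : q ^ k = ENNReal.ofReal ((r ^ d) ^ k) := by
            rw [hq, ← ENNReal.ofReal_pow (by positivity)]
          rw [this]
          exact hscale k
      _ = volume (⋃ k, T k) := (measure_iUnion hTdisj hTmeas).symm
      _ ≤ volume S := measure_mono hUsub
  -- volume of the closed strip vs T 0
  have hstrip : volume (S ∩ {z | c ≤ ⟪v, z⟫ ∧ ⟪v, z⟫ ≤ c + ε}) ≤ volume (T 0) := by
    have hsub : S ∩ {z | c ≤ ⟪v, z⟫ ∧ ⟪v, z⟫ ≤ c + ε}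
        ⊆ T 0 ∪ {z | ⟪v, z⟫ = c} := by
      rintro z ⟨hzS, hz1, hz2⟩
      rcases eq_or_lt_of_le hz1 with h | h
      · exact Or.inr h.symm
      · refine Or.inl ⟨hzS, ?_, ?_⟩ <;> simp only [pow_zero, one_mul] <;> [linarith; linarith]
    calc volume (S ∩ {z | c ≤ ⟪v, z⟫ ∧ ⟪v, z⟫ ≤ c + ε})
        ≤ volume (T 0 ∪ {z | ⟪v, z⟫ = c}) := measure_mono hsub
      _ ≤ volume (T 0) + volume {z : EuclideanSpace ℝ (Fin d) | ⟪v, z⟫ = c} :=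
          measure_union_le _ _
      _ = volume (T 0) := by rw [hplane v hvne c, add_zero]
  -- bound 1 - q ≤ 1/4
  have hq34 : (3 / 4 : ℝ≥0∞) ≤ q := by
    have hreal : (3 / 4 : ℝ) ≤ r ^ d := by
      have hb : (1 : ℝ) + d * (-(ε / (a + ε))) ≤ (1 + -(ε / (a + ε))) ^ d := by
        refine one_add_mul_le_pow ?_ d
        have : ε / (a + ε) ≤ 1 := by
          rw [div_le_one haε]; linarith
        linarith
      have hrr : r = 1 + -(ε / (a + ε)) := by rw [hr]; field_simp; ring
      have h4 : (d : ℝ) * ε / (a + ε) ≤ 1 / 4 := by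
        rw [div_le_div_iff₀ haε (by norm_num)]
        nlinarith
      rw [hrr]
      calc (3 / 4 : ℝ) = 1 - 1 / 4 := by norm_num
        _ ≤ 1 - d * ε / (a + ε) := by linarith
        _ = 1 + d * (-(ε / (a + ε))) := by ring
        _ ≤ _ := hb
    calc (3 / 4 : ℝ≥0∞) = ENNReal.ofReal (3 / 4) := by
          rw [ENNReal.ofReal_div_of_pos (by norm_num)]; norm_num
      _ ≤ ENNReal.ofReal (r ^ d) := ENNReal.ofReal_le_ofReal hreal
      _ = q := hq.symm
  have h14 : 1 - q ≤ (1 / 4 : ℝ≥0∞) := by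
    calc 1 - q ≤ 1 - (3 / 4 : ℝ≥0∞) := tsub_le_tsub_left hq34 1
      _ = 1 / 4 := by
        have h34 : (3 / 4 : ℝ≥0∞) ≠ ⊤ := by simp [ENNReal.div_eq_top]
        refine ENNReal.sub_eq_of_eq_add h34 ?_
        rw [ENNReal.div_add_div_same]
        norm_num
        exact (ENNReal.div_self (by norm_num) (by norm_num)).symm
  -- conclude
  have h1q0 : (1 - q) ≠ 0 := by
    simp only [ne_eq, tsub_eq_zero_iff_le, not_le]
    exact hq1
  have h1qtop : (1 - q) ≠ ⊤ := by
    refine ne_top_of_le_ne_top (by norm_num) (tsub_le_self.trans le_rfl)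
  calc volume (S ∩ {z | c ≤ ⟪v, z⟫ ∧ ⟪v, z⟫ ≤ c + ε})
      ≤ volume (T 0) := hstrip
    _ = (1 - q) * ((1 - q)⁻¹ * volume (T 0)) := by
        rw [← mul_assoc, ENNReal.mul_inv_cancel h1q0 h1qtop, one_mul]
    _ ≤ (1 - q) * volume S := mul_le_mul_right hsum _
    _ ≤ (1 / 4 : ℝ≥0∞) * volume S := mul_le_mul_left h14 _


theorem stmt_10 (d : ℕ) (S : Set (EuclideanSpace ℝ (Fin d)))
    (hScomp : IsCompact S) (hSconv : Convex ℝ S) (hSint : (interior S).Nonempty)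
    (v : EuclideanSpace ℝ (Fin d)) (hv : ‖v‖ = 1) (ε : ℝ)
    (hwidth : sSup ((fun u => ⟪v, u⟫) '' S) - sInf ((fun u => ⟪v, u⟫) '' S) ≥ 8 * d * ε)
    (c : ℝ) :
    volume (S ∩ {z | c ≤ ⟪v, z⟫ ∧ ⟪v, z⟫ ≤ c + ε}) ≤ (1 / 4 : ℝ≥0∞) * volume S := by
  have hvne : v ≠ 0 := by intro h; rw [h, norm_zero] at hv; norm_num at hv
  have hSne : S.Nonempty := hSint.mono interior_subset
  have hfcont : Continuous fun z : EuclideanSpace ℝ (Fin d) => ⟪v, z⟫ :=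
    continuous_const.inner continuous_id
  obtain ⟨p, hpS, hpmax'⟩ := hScomp.exists_isMaxOn hSne hfcont.continuousOn
  have hpmax : ∀ x ∈ S, ⟪v, x⟫ ≤ ⟪v, p⟫ := fun x hx => hpmax' hx
  obtain ⟨w, hwS, hwmin'⟩ := hScomp.exists_isMinOn hSne hfcont.continuousOn
  have hwmin : ∀ x ∈ S, ⟪v, w⟫ ≤ ⟪v, x⟫ := fun x hx => hwmin' hx
  have hsup : sSup ((fun u => ⟪v, u⟫) '' S) = ⟪v, p⟫ :=
    IsGreatest.csSup_eq ⟨⟨p, hpS, rfl⟩, by rintro _ ⟨x, hx, rfl⟩; exact hpmax x hx⟩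
  have hinf : sInf ((fun u => ⟪v, u⟫) '' S) = ⟪v, w⟫ :=
    IsLeast.csInf_eq ⟨⟨w, hwS, rfl⟩, by rintro _ ⟨x, hx, rfl⟩; exact hwmin x hx⟩
  rw [hsup, hinf] at hwidth
  rcases le_or_gt ε 0 with hε | hε
  · rcases lt_or_eq_of_le hε with hlt | heq
    · have hempty : S ∩ {z | c ≤ ⟪v, z⟫ ∧ ⟪v, z⟫ ≤ c + ε} = ∅ := by
        ext z
        simp only [Set.mem_inter_iff, Set.mem_setOf_eq, Set.mem_empty_iff_false, iff_false]
        rintro ⟨-, h1, h2⟩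
        linarith
      rw [hempty]
      simp
    · have hsub : S ∩ {z | c ≤ ⟪v, z⟫ ∧ ⟪v, z⟫ ≤ c + ε}
          ⊆ {z : EuclideanSpace ℝ (Fin d) | ⟪v, z⟫ = c} := by
        rintro z ⟨-, h1, h2⟩
        have : ε = 0 := heq
        simp only [Set.mem_setOf_eq]
        linarith
      have : volume (S ∩ {z | c ≤ ⟪v, z⟫ ∧ ⟪v, z⟫ ≤ c + ε}) = 0 :=
        measure_mono_null hsub (hplane v hvne c)
      rw [this]
      exact zero_le
  · rcases le_or_gt ((4 * d - 1) * ε) (⟪v, p⟫ - (c + ε)) with hcase | hcase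
    · exact key hScomp hSconv hv hε c hpS hpmax hcase
    · have hset : {z : EuclideanSpace ℝ (Fin d) | c ≤ ⟪v, z⟫ ∧ ⟪v, z⟫ ≤ c + ε}
          = {z | -(c + ε) ≤ ⟪-v, z⟫ ∧ ⟪-v, z⟫ ≤ -(c + ε) + ε} := by
        ext z
        simp only [Set.mem_setOf_eq, inner_neg_left]
        constructor <;> rintro ⟨h1, h2⟩ <;> exact ⟨by linarith, by linarith⟩
      rw [hset]
      refine key hScomp hSconv (by rwa [norm_neg]) hε (-(c + ε)) hwS ?_ ?_
      · intro x hx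
        simp only [inner_neg_left, neg_le_neg_iff]
        exact hwmin x hx
      · simp only [inner_neg_left]
        linarith
end
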